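/- arXiv:2107.03776 — 3 statements merged into one kernel-verified Lean document; each statement's English description precedes it below -/
import Mathlib

section
/- For a > 0, let C_a = { f ∈ BV(I) : f > 0 and var(f) ≤ a · ess inf(f) }. Then C_a is a convex cone: if f, g ∈ C_a and s, t > 0 then s·f + t·g ∈ C_a; moreover C_a ∪ {0} is closed in BV(I) with respect to the BV norm ‖f‖_BV = var(f) + ‖f‖_∞. -/
open MeasureTheory

noncomputable def var (f : ℝ → ℝ) (s : Set ℝ) : ℝ := (eVariationOn f s).toReal
noncomputable def einf (f : ℝ → ℝ) (s : Set ℝ) : ℝ := essInf f (volume.restrict s)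
noncomputable def supNorm (f : ℝ → ℝ) (s : Set ℝ) : ℝ :=
  essSup (fun x => |f x|) (volume.restrict s)

/-- The BV norm `‖f‖_BV = var f + ‖f‖_∞` on the interval `I`. -/
noncomputable def bvNorm (f : ℝ → ℝ) (s : Set ℝ) : ℝ := var f s + supNorm f s

/-- The cone `C_a = { f ∈ BV : f > 0 (a.e.), var f ≤ a · essinf f }`. -/
def memC (a : ℝ) (I : Set ℝ) (f : ℝ → ℝ) : Prop :=
  BoundedVariationOn f I ∧ (∀ᵐ x ∂(volume.restrict I), 0 < f x) ∧ var f I ≤ a * einf f I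

/-!
Variation is subadditive and positively homogeneous, while the essential infimum is superadditive
and positively homogeneous, so `var f ≤ a * einf f` survives positive combinations.
Both `var` and `einf` are 1-Lipschitz for the BV norm (`|einf f - einf g| ≤ ‖f - g‖_∞`), so that
inequality passes to BV limits of elements of `C_a ∪ {0}`. For such a limit `f`, either
`einf f > 0` and `f ∈ C_a`, or `0 ≤ var f ≤ a * einf f ≤ 0` makes `f` constant with
essential infimum `0`, i.e. `f = 0` a.e.
-/

open Filter Set

section Variation
variable {α E : Type*} [LinearOrder α] [SeminormedAddCommGroup E]

theorem eVariationOn_add_le (f g : α → E) (s : Set α) :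
    eVariationOn (fun x => f x + g x) s ≤ eVariationOn f s + eVariationOn g s := by
  refine iSup_le fun ⟨n, u, hu, us⟩ => ?_
  calc ∑ i ∈ Finset.range n, edist (f (u (i + 1)) + g (u (i + 1))) (f (u i) + g (u i))
      ≤ ∑ i ∈ Finset.range n,
          (edist (f (u (i + 1))) (f (u i)) + edist (g (u (i + 1))) (g (u i))) :=
        Finset.sum_le_sum fun i _ => edist_add_add_le _ _ _ _
    _ ≤ eVariationOn f s + eVariationOn g s := by
      rw [Finset.sum_add_distrib]
      exact add_le_add (eVariationOn.sum_le hu us) (eVariationOn.sum_le hu us)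

theorem eVariationOn_neg (f : α → E) (s : Set α) :
    eVariationOn (fun x => -f x) s = eVariationOn f s := by
  simp only [eVariationOn, edist_neg_neg]

theorem eVariationOn_const_smul {𝕜 : Type*} [NormedField 𝕜] [NormedSpace 𝕜 E] (c : 𝕜)
    (f : α → E) (s : Set α) :
    eVariationOn (fun x => c • f x) s = ‖c‖ₑ * eVariationOn f s := by
  simp only [eVariationOn, edist_smul₀, ENNReal.smul_def, smul_eq_mul, ← Finset.mul_sum,
    ENNReal.mul_iSup]
  rfl

theorem eVariationOn_zero (s : Set α) : eVariationOn (0 : α → E) s = 0 :=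
  eVariationOn.constant_on (subsingleton_singleton.anti (image_subset_iff.2 fun _ _ => rfl))

theorem BoundedVariationOn.add {f g : α → E} {s : Set α} (hf : BoundedVariationOn f s)
    (hg : BoundedVariationOn g s) : BoundedVariationOn (fun x => f x + g x) s :=
  ne_top_of_le_ne_top (ENNReal.add_ne_top.2 ⟨hf, hg⟩) (eVariationOn_add_le f g s)

theorem BoundedVariationOn.neg {f : α → E} {s : Set α} (hf : BoundedVariationOn f s) :
    BoundedVariationOn (fun x => -f x) s := by
  rwa [BoundedVariationOn, eVariationOn_neg]

theorem BoundedVariationOn.sub {f g : α → E} {s : Set α} (hf : BoundedVariationOn f s)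
    (hg : BoundedVariationOn g s) : BoundedVariationOn (fun x => f x - g x) s := by
  simpa only [sub_eq_add_neg] using hf.add hg.neg

theorem BoundedVariationOn.const_smul {𝕜 : Type*} [NormedField 𝕜] [NormedSpace 𝕜 E]
    {f : α → E} {s : Set α} (c : 𝕜) (hf : BoundedVariationOn f s) :
    BoundedVariationOn (fun x => c • f x) s := by
  rw [BoundedVariationOn, eVariationOn_const_smul]
  exact ENNReal.mul_ne_top enorm_ne_top hf

theorem BoundedVariationOn.exists_norm_le {f : α → E} {s : Set α} (hf : BoundedVariationOn f s) :
    ∃ M, ∀ x ∈ s, ‖f x‖ ≤ M := by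
  rcases s.eq_empty_or_nonempty with rfl | ⟨x₀, hx₀⟩
  · exact ⟨0, by simp⟩
  refine ⟨‖f x₀‖ + (eVariationOn f s).toReal, fun x hx => ?_⟩
  have := hf.dist_le hx hx₀
  rw [dist_eq_norm] at this
  linarith [norm_sub_norm_le (f x) (f x₀)]

theorem BoundedVariationOn.isBoundedUnder_abs [MeasurableSpace α] {μ : Measure α} {f : α → ℝ}
    {s : Set α} (hf : BoundedVariationOn f s) (hs : MeasurableSet s) :
    IsBoundedUnder (· ≤ ·) (ae (μ.restrict s)) (fun x => |f x|) := by
  obtain ⟨M, hM⟩ := hf.exists_norm_le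
  exact isBoundedUnder_of_eventually_le ((ae_restrict_mem hs).mono hM)

end Variation

theorem Filter.IsBoundedUnder.abs_mul_add_mul {ι : Type*} {l : Filter ι} {f g : ι → ℝ} (s t : ℝ)
    (hf : IsBoundedUnder (· ≤ ·) l (fun x => |f x|))
    (hg : IsBoundedUnder (· ≤ ·) l (fun x => |g x|)) :
    IsBoundedUnder (· ≤ ·) l (fun x => |s * f x + t * g x|) := by
  obtain ⟨M, hM⟩ := hf.eventually_le
  obtain ⟨N, hN⟩ := hg.eventually_le
  refine isBoundedUnder_of_eventually_le (a := |s| * M + |t| * N) ?_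
  filter_upwards [hM, hN] with x hfx hgx
  calc |s * f x + t * g x| ≤ |s| * |f x| + |t| * |g x| := by
        simpa only [abs_mul] using abs_add_le (s * f x) (t * g x)
    _ ≤ |s| * M + |t| * N := by gcongr

section EssInf
variable {α : Type*} [MeasurableSpace α] {μ : Measure α} {f g : α → ℝ}

/- For the zero measure every real essential infimum and supremum takes the junk value `0`,
so the lemmas of this section need no `μ ≠ 0`. -/
theorem Real.essInf_measure_zero (f : α → ℝ) : essInf f (0 : Measure α) = 0 := by
  simp [essInf, liminf_eq]

theorem Real.essSup_measure_zero (f : α → ℝ) : essSup f (0 : Measure α) = 0 := by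
  simp [essSup, limsup_eq]

theorem Real.essInf_zero (μ : Measure α) : essInf (0 : α → ℝ) μ = 0 := by
  rcases eq_zero_or_neZero μ with rfl | _
  · exact Real.essInf_measure_zero _
  · exact essInf_const' 0

theorem essSup_abs_nonneg (hf : IsBoundedUnder (· ≤ ·) (ae μ) (fun x => |f x|)) :
    0 ≤ essSup (fun x => |f x|) μ := by
  rcases eq_zero_or_neZero μ with rfl | _
  · exact (Real.essSup_measure_zero _).ge
  · exact le_limsup_of_frequently_le (Frequently.of_forall fun x => abs_nonneg (f x)) hf

theorem mul_essInf_add_mul_essInf_le {s t : ℝ} (hs : 0 ≤ s) (ht : 0 ≤ t)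
    (hf : IsBoundedUnder (· ≤ ·) (ae μ) (fun x => |f x|))
    (hg : IsBoundedUnder (· ≤ ·) (ae μ) (fun x => |g x|)) :
    s * essInf f μ + t * essInf g μ ≤ essInf (fun x => s * f x + t * g x) μ := by
  rcases eq_zero_or_neZero μ with rfl | _
  · simp [Real.essInf_measure_zero]
  have h_le := (isBoundedUnder_le_abs.1 (hf.abs_mul_add_mul s t hg)).1
  refine le_essInf_of_ae_le _ ?_ h_le.isCoboundedUnder_ge
  filter_upwards [ae_essInf_le (isBoundedUnder_le_abs.1 hf).2,
    ae_essInf_le (isBoundedUnder_le_abs.1 hg).2] with x hfx hgx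
  exact add_le_add (mul_le_mul_of_nonneg_left hfx hs) (mul_le_mul_of_nonneg_left hgx ht)

theorem essInf_le_essInf_add_essSup_abs_sub
    (hf : IsBoundedUnder (· ≤ ·) (ae μ) (fun x => |f x|))
    (hg : IsBoundedUnder (· ≤ ·) (ae μ) (fun x => |g x|)) :
    essInf f μ ≤ essInf g μ + essSup (fun x => |f x - g x|) μ := by
  rcases eq_zero_or_neZero μ with rfl | _
  · simp [Real.essInf_measure_zero, Real.essSup_measure_zero]
  have hfg : IsBoundedUnder (· ≤ ·) (ae μ) (fun x => |f x - g x|) := by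
    simpa only [one_mul, neg_one_mul, ← sub_eq_add_neg] using hf.abs_mul_add_mul 1 (-1) hg
  rw [← sub_le_iff_le_add]
  refine le_essInf_of_ae_le _ ?_ (isBoundedUnder_le_abs.1 hg).1.isCoboundedUnder_ge
  filter_upwards [ae_essInf_le (isBoundedUnder_le_abs.1 hf).2, ae_le_essSup hfg] with x hfx hfgx
  linarith [le_abs_self (f x - g x)]

theorem abs_essInf_sub_essInf_le
    (hf : IsBoundedUnder (· ≤ ·) (ae μ) (fun x => |f x|))
    (hg : IsBoundedUnder (· ≤ ·) (ae μ) (fun x => |g x|)) :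
    |essInf f μ - essInf g μ| ≤ essSup (fun x => |f x - g x|) μ := by
  rw [abs_sub_le_iff, sub_le_iff_le_add', sub_le_iff_le_add']
  refine ⟨essInf_le_essInf_add_essSup_abs_sub hf hg, ?_⟩
  simpa only [abs_sub_comm] using essInf_le_essInf_add_essSup_abs_sub hg hf

end EssInf

theorem ae_restrict_eq_essInf_of_eVariationOn_eq_zero {α : Type*} [LinearOrder α]
    [MeasurableSpace α] {μ : Measure α} {f : α → ℝ} {s : Set α} (hs : MeasurableSet s)
    (h : eVariationOn f s = 0) : ∀ᵐ x ∂(μ.restrict s), f x = essInf f (μ.restrict s) := by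
  rcases s.eq_empty_or_nonempty with rfl | ⟨x₀, hx₀⟩
  · simp
  have hconst : ∀ᵐ x ∂(μ.restrict s), f x = f x₀ := (ae_restrict_mem hs).mono fun x hx =>
    edist_eq_zero.1 ((eVariationOn.eq_zero_iff f).1 h x hx x₀ hx₀)
  rcases eq_zero_or_neZero (μ.restrict s) with hμ | _
  · simp [hμ]
  · rwa [essInf_congr_ae hconst, essInf_const']

section Cone
variable {a : ℝ} {I : Set ℝ} {f g : ℝ → ℝ}

theorem var_nonneg (f : ℝ → ℝ) (I : Set ℝ) : 0 ≤ var f I :=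
  ENNReal.toReal_nonneg

theorem var_add_le (hf : BoundedVariationOn f I) (hg : BoundedVariationOn g I) :
    var (fun x => f x + g x) I ≤ var f I + var g I :=
  ENNReal.toReal_le_add (eVariationOn_add_le f g I) hf hg

theorem var_const_mul (c : ℝ) (f : ℝ → ℝ) (I : Set ℝ) :
    var (fun x => c * f x) I = |c| * var f I := by
  change (eVariationOn (fun x => c • f x) I).toReal = _
  rw [eVariationOn_const_smul, ENNReal.toReal_mul, toReal_enorm, Real.norm_eq_abs, var]

theorem var_sub_comm (f g : ℝ → ℝ) (I : Set ℝ) :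
    var (fun x => f x - g x) I = var (fun x => g x - f x) I := by
  simp only [var, ← eVariationOn_neg (fun x => g x - f x), neg_sub]

theorem abs_var_sub_var_le (hf : BoundedVariationOn f I) (hg : BoundedVariationOn g I) :
    |var f I - var g I| ≤ var (fun x => f x - g x) I := by
  have triangle : ∀ {f g : ℝ → ℝ}, BoundedVariationOn f I → BoundedVariationOn g I →
      var f I ≤ var g I + var (fun x => f x - g x) I := fun hf hg => by
    simpa only [add_sub_cancel] using var_add_le hg (hf.sub hg)
  rw [abs_sub_le_iff, sub_le_iff_le_add', sub_le_iff_le_add']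
  refine ⟨triangle hf hg, ?_⟩
  rw [var_sub_comm]
  exact triangle hg hf

theorem supNorm_nonneg (hI : MeasurableSet I) (hf : BoundedVariationOn f I) : 0 ≤ supNorm f I :=
  essSup_abs_nonneg (hf.isBoundedUnder_abs hI)

theorem abs_einf_sub_einf_le (hI : MeasurableSet I) (hf : BoundedVariationOn f I)
    (hg : BoundedVariationOn g I) :
    |einf f I - einf g I| ≤ supNorm (fun x => f x - g x) I :=
  abs_essInf_sub_essInf_le (hf.isBoundedUnder_abs hI) (hg.isBoundedUnder_abs hI)

theorem memC_mul_add_mul (ha : 0 ≤ a) (hI : MeasurableSet I) {s t : ℝ} (hs : 0 < s) (ht : 0 < t)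
    (hf : memC a I f) (hg : memC a I g) : memC a I (fun x => s * f x + t * g x) := by
  obtain ⟨hf_bv, hf_pos, hf_var⟩ := hf
  obtain ⟨hg_bv, hg_pos, hg_var⟩ := hg
  have hsf : BoundedVariationOn (fun x => s * f x) I := hf_bv.const_smul s
  have htg : BoundedVariationOn (fun x => t * g x) I := hg_bv.const_smul t
  refine ⟨hsf.add htg, ?_, ?_⟩
  · filter_upwards [hf_pos, hg_pos] with x hfx hgx
    positivity
  · calc var (fun x => s * f x + t * g x) I
        ≤ s * var f I + t * var g I := by
          grw [var_add_le hsf htg, var_const_mul, var_const_mul, abs_of_pos hs, abs_of_pos ht]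
      _ ≤ a * (s * einf f I + t * einf g I) := by
          grw [hf_var, hg_var]
          linarith
      _ ≤ a * einf (fun x => s * f x + t * g x) I := by
          gcongr
          exact mul_essInf_add_mul_essInf_le hs.le ht.le (hf_bv.isBoundedUnder_abs hI)
            (hg_bv.isBoundedUnder_abs hI)

theorem BoundedVariationOn.of_memC_or_eq_zero (h : memC a I f ∨ f = 0) :
    BoundedVariationOn f I := by
  rcases h with h | rfl
  · exact h.1
  · simp [BoundedVariationOn, eVariationOn_zero]

theorem var_le_mul_einf_of_memC_or_eq_zero (h : memC a I f ∨ f = 0) : var f I ≤ a * einf f I := by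
  rcases h with h | rfl
  · exact h.2.2
  · simp [var, einf, eVariationOn_zero, Real.essInf_zero]

section Limits
variable {ι : Type*} {l : Filter ι} {F : ι → ℝ → ℝ}

theorem tendsto_var_of_tendsto_bvNorm (hI : MeasurableSet I)
    (hF : ∀ i, BoundedVariationOn (F i) I) (hf : BoundedVariationOn f I)
    (h : Tendsto (fun i => bvNorm (fun x => F i x - f x) I) l (nhds 0)) :
    Tendsto (fun i => var (F i) I) l (nhds (var f I)) := by
  refine tendsto_iff_dist_tendsto_zero.2 (squeeze_zero (fun _ => dist_nonneg) (fun i => ?_) h)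
  rw [Real.dist_eq, bvNorm]
  linarith [abs_var_sub_var_le (hF i) hf, supNorm_nonneg hI ((hF i).sub hf)]

theorem tendsto_einf_of_tendsto_bvNorm (hI : MeasurableSet I)
    (hF : ∀ i, BoundedVariationOn (F i) I) (hf : BoundedVariationOn f I)
    (h : Tendsto (fun i => bvNorm (fun x => F i x - f x) I) l (nhds 0)) :
    Tendsto (fun i => einf (F i) I) l (nhds (einf f I)) := by
  refine tendsto_iff_dist_tendsto_zero.2 (squeeze_zero (fun _ => dist_nonneg) (fun i => ?_) h)
  rw [Real.dist_eq, bvNorm]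
  linarith [abs_einf_sub_einf_le hI (hF i) hf, var_nonneg (fun x => F i x - f x) I]

end Limits

theorem memC_or_ae_eq_zero_of_var_le_mul_einf (ha : 0 < a) (hI : MeasurableSet I)
    (hf : BoundedVariationOn f I) (h : var f I ≤ a * einf f I) :
    memC a I f ∨ ∀ᵐ x ∂(volume.restrict I), f x = 0 := by
  rcases lt_or_ge 0 (einf f I) with hpos | hnonpos
  · refine Or.inl ⟨hf, ?_, h⟩
    filter_upwards [ae_essInf_le (isBoundedUnder_le_abs.1 (hf.isBoundedUnder_abs hI)).2] with x hx
    exact hpos.trans_le hx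
  · right
    have heinf : einf f I = 0 :=
      le_antisymm hnonpos (nonneg_of_mul_nonneg_right ((var_nonneg f I).trans h) ha)
    have hvar : eVariationOn f I = 0 := by
      rw [heinf, mul_zero] at h
      exact ((ENNReal.toReal_eq_zero_iff _).1 (le_antisymm h (var_nonneg f I))).resolve_right hf
    filter_upwards [ae_restrict_eq_essInf_of_eVariationOn_eq_zero hI hvar] with x hx
    rwa [← einf, heinf] at hx

end Cone

theorem stmt4_general (A B : ℝ) (a : ℝ) (ha : 0 < a) :
    (∀ f g : ℝ → ℝ, ∀ s t : ℝ, 0 < s → 0 < t →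
      memC a (Set.Icc A B) f → memC a (Set.Icc A B) g →
      memC a (Set.Icc A B) (fun x => s * f x + t * g x)) ∧
    (∀ (F : ℕ → ℝ → ℝ) (f : ℝ → ℝ),
      (∀ n, memC a (Set.Icc A B) (F n) ∨ F n = 0) →
      BoundedVariationOn f (Set.Icc A B) →
      Filter.Tendsto (fun n => bvNorm (fun x => F n x - f x) (Set.Icc A B))
        Filter.atTop (nhds 0) →
      memC a (Set.Icc A B) f ∨ (∀ᵐ x ∂(volume.restrict (Set.Icc A B)), f x = 0)) := by
  refine ⟨fun f g s t hs ht hf hg => memC_mul_add_mul ha.le measurableSet_Icc hs ht hf hg,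
    fun F f hF hf hlim => ?_⟩
  have hF_bv : ∀ n, BoundedVariationOn (F n) (Icc A B) :=
    fun n => BoundedVariationOn.of_memC_or_eq_zero (hF n)
  have hle : var f (Icc A B) ≤ a * einf f (Icc A B) :=
    le_of_tendsto_of_tendsto' (tendsto_var_of_tendsto_bvNorm measurableSet_Icc hF_bv hf hlim)
      ((tendsto_einf_of_tendsto_bvNorm measurableSet_Icc hF_bv hf hlim).const_mul a)
      fun n => var_le_mul_einf_of_memC_or_eq_zero (hF n)
  exact memC_or_ae_eq_zero_of_var_le_mul_einf ha measurableSet_Icc hf hle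

/-- For `a > 0`, `C_a` is a convex cone: it is closed under addition and
positive scalar combinations; moreover `C_a ∪ {0}` is (sequentially) closed in the BV
norm `‖f‖_BV = var f + ‖f‖_∞`. -/
theorem stmt4 (A B : ℝ) (hAB : A ≤ B) (a : ℝ) (ha : 0 < a) :
    (∀ f g : ℝ → ℝ, ∀ s t : ℝ, 0 < s → 0 < t →
      memC a (Set.Icc A B) f → memC a (Set.Icc A B) g →
      memC a (Set.Icc A B) (fun x => s * f x + t * g x)) ∧
    (∀ (F : ℕ → ℝ → ℝ) (f : ℝ → ℝ),
      (∀ n, memC a (Set.Icc A B) (F n) ∨ F n = 0) →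
      BoundedVariationOn f (Set.Icc A B) →
      Filter.Tendsto (fun n => bvNorm (fun x => F n x - f x) (Set.Icc A B))
        Filter.atTop (nhds 0) →
      memC a (Set.Icc A B) f ∨ (∀ᵐ x ∂(volume.restrict (Set.Icc A B)), f x = 0)) :=
  stmt4_general A B a ha
end

section
/- Let a ≥ 1 and 0 < γ < 1. If f ∈ BV(I) satisfies f > 0, var(f) ≤ γ·a·ess inf(f), and ess inf(f) > 0, then for every λ with 0 < λ ≤ (1-γ)·ess inf(f), the function f - λ satisfies f - λ > 0 and var(f - λ) ≤ a·ess inf(f - λ); i.e., the constant λ precedes f in the partial order induced by the cone C_a. -/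
open MeasureTheory

lemma evar_sub_const (f : ℝ → ℝ) (c : ℝ) (s : Set ℝ) :
    eVariationOn (fun x => f x - c) s = eVariationOn f s := by
  simp only [eVariationOn]
  congr 1 with p
  congr 1 with i
  simp [edist_dist, dist_sub_eq_dist_add_right]

lemma essInf_zero_measure (f : ℝ → ℝ) : essInf f (0 : Measure ℝ) = 0 := by
  rw [essInf, show (ae (0 : Measure ℝ)) = ⊥ from ae_eq_bot.2 rfl]
  simp only [Filter.liminf, Filter.limsInf, Filter.map_bot, Filter.eventually_bot,
    Set.setOf_true]
  exact Real.sSup_of_not_bddAbove (by simpa using not_bddAbove_univ)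

/-- Let `a ≥ 1`, `0 < γ < 1`.  If `f ∈ BV(I)` is a.e. positive with
`var f ≤ γ·a·essinf f` and `essinf f > 0`, then for every `0 < λ ≤ (1-γ)·essinf f`,
the function `f - λ` is a.e. positive and `var (f - λ) ≤ a·essinf (f - λ)`;
i.e. the constant `λ` precedes `f` in the cone order of `C_a`. -/
theorem stmt5 (A B : ℝ) (hAB : A ≤ B) (a γ : ℝ) (ha : 1 ≤ a) (hγ0 : 0 < γ) (hγ1 : γ < 1)
    (f : ℝ → ℝ) (hbv : BoundedVariationOn f (Set.Icc A B))
    (hpos : ∀ᵐ x ∂(volume.restrict (Set.Icc A B)), 0 < f x)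
    (hvar : var f (Set.Icc A B) ≤ γ * a * einf f (Set.Icc A B))
    (hinf : 0 < einf f (Set.Icc A B))
    (lam : ℝ) (hlam0 : 0 < lam) (hlam : lam ≤ (1 - γ) * einf f (Set.Icc A B)) :
    (∀ᵐ x ∂(volume.restrict (Set.Icc A B)), 0 < f x - lam) ∧
    var (fun x => f x - lam) (Set.Icc A B)
      ≤ a * einf (fun x => f x - lam) (Set.Icc A B) := by
  set s : Set ℝ := Set.Icc A B with hs
  set μ : Measure ℝ := volume.restrict s with hμ
  have hμ0 : μ ≠ 0 := by
    intro h
    rw [einf, ← hμ, h, essInf_zero_measure] at hinf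
    exact lt_irrefl 0 hinf
  haveI hne : (ae μ).NeBot := ae_neBot.2 hμ0
  -- f is a.e. bounded below by 0
  have bdd_below : (ae μ).IsBoundedUnder (· ≥ ·) f :=
    ⟨0, Filter.eventually_map.2 (hpos.mono fun x hx => hx.le)⟩
  -- f is a.e. bounded above
  have hAmem : A ∈ s := Set.left_mem_Icc.2 hAB
  have hmem : ∀ᵐ x ∂μ, x ∈ s := ae_restrict_mem measurableSet_Icc
  have hub : ∀ᵐ x ∂μ, f x ≤ f A + var f s := by
    filter_upwards [hmem] with x hx
    have h1 : edist (f x) (f A) ≤ eVariationOn f s := eVariationOn.edist_le f hx hAmem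
    have h2 : dist (f x) (f A) ≤ var f s := by
      rw [var, dist_edist]
      exact ENNReal.toReal_mono hbv h1
    have := abs_le.1 (by rwa [Real.dist_eq] at h2) |>.2
    linarith
  have cobdd : (ae μ).IsCoboundedUnder (· ≥ ·) f :=
    Filter.isCoboundedUnder_ge_of_eventually_le _ hub
  -- essInf of the shifted function
  have key : einf (fun x => f x - lam) s = einf f s - lam := by
    rw [einf, einf, ← hμ]
    exact liminf_sub_const (ae μ) f lam cobdd bdd_below
  -- a.e. positivity
  have hlt : lam < einf f s := by
    have : (1 - γ) * einf f s < einf f s := by nlinarith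
    linarith
  have hpos' : ∀ᵐ x ∂μ, 0 < f x - lam := by
    have := ae_lt_of_lt_essInf (f := f) (μ := μ) (by rw [einf, ← hμ] at hlt; exact hlt) bdd_below
    filter_upwards [this] with x hx
    linarith
  refine ⟨hpos', ?_⟩
  have hvareq : var (fun x => f x - lam) s = var f s := by
    rw [var, var, evar_sub_const]
  rw [hvareq, key]
  have hγae : γ * a * einf f s ≤ a * (einf f s - lam) := by nlinarith
  linarith
end

section
/- Let σ : (Ω, m) → (Ω, m) be an invertible ergodic measure-preserving transformation of a probability space, and let c, d : Ω → (0, ∞) be measurable with log c and log d integrable and ∫ log c dm < log γ̃ < log γ < 0 for some constants γ̃, γ ∈ (0,1). Then the function a : Ω → [0, ∞] defined by a(ω) = Σ_{j=0}^∞ γ^{-j-1} d(σ^{-j-1}ω) ∏_{k=1}^{j} c(σ^{-k}ω) (with the empty product equal to 1) is m-almost surely finite, and satisfies the twisted cohomological equation γ·a(σω) = c(ω)·a(ω) + d(ω) for m-a.e. ω. -/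
/-!
Write `τ = σ⁻¹`. The logarithm of the `j`-th term of the series is
`log d(τ^{j+1} ω) + Σ_{k=1}^{j} log c(τ^k ω) - (j+1) log γ`.
Since `∫ log c < log γ̃`, the maximal ergodic theorem for the ergodic map `τ` bounds the Birkhoff
sums of `log c - log γ̃` from above almost surely; since `log d` is integrable, Borel–Cantelli gives
`log d(τ^n ω) ≤ ε n` eventually. With `ε = (log γ - log γ̃)/2` the terms decay like `e^{-ε j}`.
The cohomological equation is a shift of the summation index: the terms at `σ ω` are `d ω / γ`
followed by `c ω / γ` times the terms at `ω`.
-/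

open MeasureTheory Filter Real

lemma summable_of_eventually_log_le {u : ℕ → ℝ} (hu : ∀ n, 0 < u n) {C δ : ℝ} (hδ : 0 < δ)
    (h : ∀ᶠ n in atTop, log (u n) ≤ C - δ * n) : Summable u := by
  have hgeom : Summable fun n : ℕ => exp C * exp (-δ) ^ n :=
    (summable_geometric_of_lt_one (exp_nonneg _)
      (exp_lt_one_iff.mpr (neg_lt_zero.mpr hδ))).mul_left _
  refine .of_norm_bounded_eventually_nat hgeom ?_
  filter_upwards [h] with n hn
  rw [norm_of_nonneg (hu n).le, ← exp_log (hu n), ← exp_nat_mul, ← exp_add]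
  exact exp_le_exp.mpr (by linarith)

theorem MeasureTheory.MeasurePreserving.ae_eventually_apply_iterate_le_mul {α : Type*}
    [MeasurableSpace α] {μ : Measure α} [IsProbabilityMeasure μ] {f : α → α}
    (hf : MeasurePreserving f μ μ) {h : α → ℝ} (hh : Integrable h μ) {ε : ℝ} (hε : 0 < ε) :
    ∀ᵐ x ∂μ, ∀ᶠ n : ℕ in atTop, h (f^[n] x) ≤ ε * n := by
  -- `tsum_prob_mem_Ioi_lt_top` is stated for the ambient probability measure `ℙ`.
  let _ : MeasureSpace α := ⟨μ⟩
  have hX : Integrable (fun x => |h x| / ε) μ := hh.abs.div_const ε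
  have hsum := ProbabilityTheory.tsum_prob_mem_Ioi_lt_top hX fun x => by positivity
  have hle : ∀ n : ℕ,
      μ (f^[n] ⁻¹' {x | ε * n < h x}) ≤ μ {x | |h x| / ε ∈ Set.Ioi (n : ℝ)} := by
    intro n
    rw [(hf.iterate n).measure_preimage (nullMeasurableSet_lt aemeasurable_const hh.aemeasurable)]
    refine measure_mono fun x hx => ?_
    simp only [Set.mem_ofPred_eq, Set.mem_Ioi, lt_div_iff₀ hε] at hx ⊢
    linarith [le_abs_self (h x)]
  filter_upwards [ae_eventually_notMem (ne_top_of_le_ne_top hsum.ne (ENNReal.tsum_le_tsum hle))]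
    with x hx
  filter_upwards [hx] with n hn
  simpa using hn

section MaximalErgodic

variable {α : Type*} {f : α → α} {g : α → ℝ}

/-- `birkhoffMax f g n = max (0, S₁, …, Sₙ)` for the Birkhoff sums `Sₖ = birkhoffSum f g k`. -/
noncomputable def birkhoffMax (f : α → α) (g : α → ℝ) : ℕ → α → ℝ
  | 0 => 0
  | n + 1 => fun x => max 0 (g x + birkhoffMax f g n (f x))

lemma birkhoffMax_nonneg (f : α → α) (g : α → ℝ) : ∀ n x, 0 ≤ birkhoffMax f g n x
  | 0, _ => le_rfl
  | _ + 1, _ => le_max_left _ _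

lemma birkhoffMax_le_succ (f : α → α) (g : α → ℝ) : ∀ n x,
    birkhoffMax f g n x ≤ birkhoffMax f g (n + 1) x
  | 0, x => birkhoffMax_nonneg f g 1 x
  | n + 1, x => max_le_max le_rfl (add_le_add le_rfl (birkhoffMax_le_succ f g n (f x)))

lemma birkhoffSum_le_birkhoffMax (f : α → α) (g : α → ℝ) : ∀ n x,
    birkhoffSum f g n x ≤ birkhoffMax f g n x
  | 0, _ => le_rfl
  | n + 1, x => by
    rw [birkhoffSum_succ']
    exact (add_le_add le_rfl (birkhoffSum_le_birkhoffMax f g n (f x))).trans (le_max_right _ _)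

lemma bddAbove_range_birkhoffSum_apply_iff (f : α → α) (g : α → ℝ) (x : α) :
    BddAbove (Set.range fun n => birkhoffSum f g n (f x)) ↔
      BddAbove (Set.range fun n => birkhoffSum f g n x) := by
  constructor
  · rintro ⟨K, hK⟩
    refine ⟨max 0 (g x + K), ?_⟩
    rintro _ ⟨_ | n, rfl⟩
    · exact le_max_left _ _
    · dsimp only
      rw [birkhoffSum_succ']
      exact (add_le_add le_rfl (hK ⟨n, rfl⟩)).trans (le_max_right _ _)
  · rintro ⟨K, hK⟩
    refine ⟨K - g x, ?_⟩
    rintro _ ⟨n, rfl⟩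
    have : birkhoffSum f g (n + 1) x ≤ K := hK ⟨n + 1, rfl⟩
    rw [birkhoffSum_succ'] at this
    dsimp only
    linarith

/-- On `{0 < Mₙ}` one has `Mₙ ≤ Mₙ₊₁ = g + Mₙ ∘ f`, and off it `Mₙ = 0 ≤ Mₙ ∘ f`. -/
lemma birkhoffMax_sub_comp_le_indicator (f : α → α) (g : α → ℝ) (n : ℕ) (x : α) :
    birkhoffMax f g n x - birkhoffMax f g n (f x) ≤
      {y | 0 < birkhoffMax f g n y}.indicator g x := by
  have hsucc := birkhoffMax_le_succ f g n x
  have hnonneg := birkhoffMax_nonneg f g n (f x)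
  by_cases hx : 0 < birkhoffMax f g n x
  · rw [Set.indicator_of_mem (show x ∈ {y | 0 < birkhoffMax f g n y} from hx)]
    have := (le_max_iff.mp hsucc).resolve_left hx.not_ge
    linarith
  · rw [Set.indicator_of_notMem (show x ∉ {y | 0 < birkhoffMax f g n y} from hx)]
    linarith

variable [MeasurableSpace α] {μ : Measure α}

lemma measurable_birkhoffSum (hf : Measurable f) (hg : Measurable g) (n : ℕ) :
    Measurable (birkhoffSum f g n) :=
  Finset.measurable_sum _ fun k _ => hg.comp (hf.iterate k)

lemma measurable_birkhoffMax (hf : Measurable f) (hg : Measurable g) :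
    ∀ n, Measurable (birkhoffMax f g n)
  | 0 => measurable_const
  | n + 1 => measurable_const.max (hg.add ((measurable_birkhoffMax hf hg n).comp hf))

lemma integrable_birkhoffMax (hf : MeasurePreserving f μ μ) (hg : Integrable g μ) :
    ∀ n, Integrable (birkhoffMax f g n) μ
  | 0 => integrable_zero _ _ _
  | n + 1 => by
    have := (hg.add (hf.integrable_comp_of_integrable (integrable_birkhoffMax hf hg n))).pos_part
    exact this.congr (Eventually.of_forall fun x => max_comm _ _)

/-- Hopf's maximal ergodic theorem, with Garsia's proof. -/
theorem MeasureTheory.MeasurePreserving.setIntegral_birkhoffMax_pos_nonneg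
    (hf : MeasurePreserving f μ μ) (hgm : Measurable g) (hg : Integrable g μ) (n : ℕ) :
    0 ≤ ∫ x in {x | 0 < birkhoffMax f g n x}, g x ∂μ := by
  have hM := integrable_birkhoffMax hf hg n
  have hMf : Integrable (fun x => birkhoffMax f g n (f x)) μ := hf.integrable_comp_of_integrable hM
  have hmeas : MeasurableSet {x | 0 < birkhoffMax f g n x} :=
    measurableSet_lt measurable_const (measurable_birkhoffMax hf.measurable hgm n)
  have hcomp : ∫ x, birkhoffMax f g n (f x) ∂μ = ∫ x, birkhoffMax f g n x ∂μ := by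
    have := integral_map hf.aemeasurable (hf.map_eq ▸ hM.aestronglyMeasurable)
    rwa [hf.map_eq, eq_comm] at this
  rw [← integral_indicator hmeas]
  calc (0 : ℝ) = ∫ x, (birkhoffMax f g n x - birkhoffMax f g n (f x)) ∂μ := by
        rw [integral_sub hM hMf, hcomp, sub_self]
    _ ≤ _ := integral_mono (hM.sub hMf) (hg.indicator hmeas)
        (birkhoffMax_sub_comp_le_indicator f g n)

theorem MeasureTheory.MeasurePreserving.setIntegral_iUnion_birkhoffMax_pos_nonneg
    (hf : MeasurePreserving f μ μ) (hgm : Measurable g) (hg : Integrable g μ) :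
    0 ≤ ∫ x in ⋃ n, {x | 0 < birkhoffMax f g n x}, g x ∂μ := by
  refine ge_of_tendsto (tendsto_setIntegral_of_monotone (fun n => ?_) ?_ hg.integrableOn)
    (Eventually.of_forall (hf.setIntegral_birkhoffMax_pos_nonneg hgm hg))
  · exact measurableSet_lt measurable_const (measurable_birkhoffMax hf.measurable hgm n)
  · exact monotone_nat_of_le_succ fun n x (hx : 0 < _) => hx.trans_le (birkhoffMax_le_succ f g n x)

/-- Otherwise the set where the sums are unbounded is invariant, hence of full measure, and it lies
in `⋃ n, {0 < Mₙ}`, so the maximal ergodic theorem gives `0 ≤ ∫ g`. -/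
theorem Ergodic.ae_bddAbove_range_birkhoffSum (hf : Ergodic f μ) (hgm : Measurable g)
    (hg : Integrable g μ) (hneg : ∫ x, g x ∂μ < 0) :
    ∀ᵐ x ∂μ, BddAbove (Set.range fun n => birkhoffSum f g n x) := by
  set B := {x | BddAbove (Set.range fun n => birkhoffSum f g n x)}
  have hBm : MeasurableSet B :=
    measurableSet_bddAbove_range (measurable_birkhoffSum hf.measurable hgm)
  have hBinv : f ⁻¹' B = B := Set.ext (bddAbove_range_birkhoffSum_apply_iff f g)
  rcases hf.ae_empty_or_univ hBm hBinv with hB | hB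
  · set U := ⋃ n, {x | 0 < birkhoffMax f g n x}
    have hBU : Bᶜ ⊆ U := fun x hx => by
      obtain ⟨_, ⟨n, rfl⟩, hn⟩ := not_bddAbove_iff.mp hx 0
      exact Set.mem_iUnion.mpr ⟨n, hn.trans_le (birkhoffSum_le_birkhoffMax f g n x)⟩
    have hU : U =ᵐ[μ] Set.univ :=
      ae_eq_univ.mpr (measure_mono_null (Set.compl_subset_comm.mp hBU) (ae_eq_empty.mp hB))
    have := hf.setIntegral_iUnion_birkhoffMax_pos_nonneg hgm hg
    rw [setIntegral_congr_set hU, setIntegral_univ] at this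
    exact absurd hneg this.not_gt
  · exact ae_eq_univ.mp hB

end MaximalErgodic

section CohomologySeries

variable {Ω : Type*} {σ τ : Ω → Ω} {c d : Ω → ℝ} {γ : ℝ}

noncomputable def cohomologySeriesTerm (τ : Ω → Ω) (c d : Ω → ℝ) (γ : ℝ) (ω : Ω) (j : ℕ) : ℝ :=
  γ ^ (-(j : ℤ) - 1) * d (τ^[j + 1] ω) * ∏ k ∈ Finset.range j, c (τ^[k + 1] ω)

lemma cohomologySeriesTerm_pos (hc : ∀ ω, 0 < c ω) (hd : ∀ ω, 0 < d ω) (hγ : 0 < γ) (ω : Ω)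
    (j : ℕ) : 0 < cohomologySeriesTerm τ c d γ ω j :=
  mul_pos (mul_pos (zpow_pos hγ _) (hd _)) (Finset.prod_pos fun _ _ => hc _)

lemma log_cohomologySeriesTerm (hc : ∀ ω, 0 < c ω) (hd : ∀ ω, 0 < d ω) (hγ : 0 < γ) (ω : Ω)
    (j : ℕ) : log (cohomologySeriesTerm τ c d γ ω j) =
      log (d (τ^[j + 1] ω)) + (birkhoffSum τ (fun x => log (c x)) (j + 1) ω - log (c ω))
        - (j + 1) * log γ := by
  rw [cohomologySeriesTerm, log_mul (mul_pos (zpow_pos hγ _) (hd _)).ne'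
    (Finset.prod_pos fun _ _ => hc _).ne', log_mul (zpow_pos hγ _).ne' (hd _).ne',
    log_zpow, log_prod fun _ _ => (hc _).ne', birkhoffSum_succ', birkhoffSum]
  simp only [Function.iterate_succ_apply]
  push_cast
  ring

lemma summable_cohomologySeriesTerm (hc : ∀ ω, 0 < c ω) (hd : ∀ ω, 0 < d ω) (hγ : 0 < γ)
    {ℓ ε : ℝ} (hℓε : ℓ + ε < log γ) {ω : Ω}
    (hbdd : BddAbove (Set.range fun n => birkhoffSum τ (fun x => log (c x) - ℓ) n ω))
    (hdω : ∀ᶠ n : ℕ in atTop, log (d (τ^[n] ω)) ≤ ε * n) :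
    Summable (cohomologySeriesTerm τ c d γ ω) := by
  obtain ⟨K, hK⟩ := hbdd
  have hcω : ∀ n : ℕ, birkhoffSum τ (fun x => log (c x)) n ω ≤ K + n * ℓ := fun n => by
    have : birkhoffSum τ (fun x => log (c x) - ℓ) n ω ≤ K := hK ⟨n, rfl⟩
    simp only [birkhoffSum, Finset.sum_sub_distrib, Finset.sum_const, Finset.card_range,
      nsmul_eq_mul] at this ⊢
    linarith
  refine summable_of_eventually_log_le (cohomologySeriesTerm_pos hc hd hγ ω)
    (C := K - log (c ω)) (sub_pos.mpr hℓε) ?_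
  filter_upwards [(tendsto_add_atTop_nat 1).eventually hdω] with j hj
  rw [log_cohomologySeriesTerm hc hd hγ]
  have := hcω (j + 1)
  push_cast at hj this
  nlinarith

lemma cohomologySeriesTerm_apply_zero (hστ : Function.LeftInverse τ σ) (ω : Ω) :
    cohomologySeriesTerm τ c d γ (σ ω) 0 = γ⁻¹ * d ω := by
  simp [cohomologySeriesTerm, hστ ω]

lemma cohomologySeriesTerm_apply_succ (hστ : Function.LeftInverse τ σ) (hγ : γ ≠ 0) (ω : Ω)
    (j : ℕ) :
    cohomologySeriesTerm τ c d γ (σ ω) (j + 1) = c ω / γ * cohomologySeriesTerm τ c d γ ω j := by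
  have hiter : ∀ n, τ^[n + 1] (σ ω) = τ^[n] ω := fun n => by
    rw [Function.iterate_succ_apply, hστ ω]
  simp only [cohomologySeriesTerm, hiter, Finset.prod_range_succ' (fun k => c (τ^[k] ω)),
    Function.iterate_zero_apply]
  rw [show -((j + 1 : ℕ) : ℤ) - 1 = (-(j : ℤ) - 1) - 1 by push_cast; ring, zpow_sub_one₀ hγ]
  ring

lemma HasSum.cohomologySeriesTerm_apply (hστ : Function.LeftInverse τ σ) (hγ : γ ≠ 0) {ω : Ω}
    {a : ℝ} (ha : HasSum (cohomologySeriesTerm τ c d γ ω) a) :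
    HasSum (cohomologySeriesTerm τ c d γ (σ ω)) (γ⁻¹ * (c ω * a + d ω)) := by
  have := (hasSum_nat_add_iff 1).mp
    ((ha.mul_left (c ω / γ)).congr_fun (cohomologySeriesTerm_apply_succ hστ hγ ω))
  rw [Finset.sum_range_one, cohomologySeriesTerm_apply_zero hστ] at this
  rwa [show γ⁻¹ * (c ω * a + d ω) = c ω / γ * a + γ⁻¹ * d ω by ring]

end CohomologySeries

theorem stmt10_general {Ω : Type*} [MeasurableSpace Ω] (m : Measure Ω) [IsProbabilityMeasure m]
    (σ σinv : Ω → Ω)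
    (herg : Ergodic σ m)
    (hlinv : Function.LeftInverse σinv σ) (hrinv : Function.RightInverse σinv σ)
    (hinvmeas : Measurable σinv)
    (c d : Ω → ℝ) (hcm : Measurable c)
    (hcpos : ∀ ω, 0 < c ω) (hdpos : ∀ ω, 0 < d ω)
    (hlogc : Integrable (fun ω => Real.log (c ω)) m)
    (hlogd : Integrable (fun ω => Real.log (d ω)) m)
    (γ γ' : ℝ) (hγ0 : 0 < γ)
    (hintc : ∫ ω, Real.log (c ω) ∂m < Real.log γ')
    (hγ'γ : Real.log γ' < Real.log γ)
    (A : Ω → ℝ)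
    (hA : ∀ ω, A ω = ∑' j : ℕ,
      γ ^ (-(j : ℤ) - 1) * d (σinv^[j + 1] ω) * ∏ k ∈ Finset.range j, c (σinv^[k + 1] ω)) :
    ∀ᵐ ω ∂m,
      Summable (fun j : ℕ =>
        γ ^ (-(j : ℤ) - 1) * d (σinv^[j + 1] ω) * ∏ k ∈ Finset.range j, c (σinv^[k + 1] ω)) ∧
      γ * A (σ ω) = c ω * A ω + d ω := by
  let e : Ω ≃ᵐ Ω := ⟨⟨σ, σinv, hlinv, hrinv⟩, herg.measurable, hinvmeas⟩
  have hergInv : Ergodic σinv m := (show Ergodic e m from herg).symm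
  have hneg : ∫ ω, (log (c ω) - log γ') ∂m < 0 := by
    rw [integral_sub hlogc (integrable_const _), integral_const]
    simpa using hintc
  have hε : 0 < (log γ - log γ') / 2 := by linarith
  filter_upwards [hergInv.ae_bddAbove_range_birkhoffSum (g := fun ω => log (c ω) - log γ')
      ((measurable_log.comp hcm).sub measurable_const) (hlogc.sub (integrable_const _)) hneg,
    hergInv.toMeasurePreserving.ae_eventually_apply_iterate_le_mul hlogd hε] with ω hbdd hdω
  have hsum : Summable (cohomologySeriesTerm σinv c d γ ω) :=
    summable_cohomologySeriesTerm hcpos hdpos hγ0 (by linarith) hbdd hdω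
  have hA' : ∀ ω, A ω = ∑' j, cohomologySeriesTerm σinv c d γ ω j := hA
  refine ⟨hsum, ?_⟩
  rw [hA', hA', (hsum.hasSum.cohomologySeriesTerm_apply hlinv hγ0.ne').tsum_eq]
  field_simp

/-- Let `σ` be an invertible ergodic measure-preserving transformation of a
probability space `(Ω, m)` and `c, d : Ω → (0,∞)` measurable with `log c, log d ∈ L¹(m)`
and `∫ log c dm < log γ̃ < log γ < 0` for constants `γ̃, γ ∈ (0,1)`.  Then
`a(ω) = Σ_{j≥0} γ^{-j-1} d(σ^{-j-1}ω) ∏_{k=1}^j c(σ^{-k}ω)` is m-a.s. finite (the series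
is summable) and satisfies `γ·a(σω) = c(ω)·a(ω) + d(ω)` for m-a.e. `ω`. -/
theorem stmt10 {Ω : Type*} [MeasurableSpace Ω] (m : Measure Ω) [IsProbabilityMeasure m]
    (σ σinv : Ω → Ω)
    (hmp : MeasurePreserving σ m m) (herg : Ergodic σ m)
    (hlinv : Function.LeftInverse σinv σ) (hrinv : Function.RightInverse σinv σ)
    (hinvmeas : Measurable σinv)
    (c d : Ω → ℝ) (hcm : Measurable c) (hdm : Measurable d)
    (hcpos : ∀ ω, 0 < c ω) (hdpos : ∀ ω, 0 < d ω)
    (hlogc : Integrable (fun ω => Real.log (c ω)) m)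
    (hlogd : Integrable (fun ω => Real.log (d ω)) m)
    (γ γ' : ℝ) (hγ'0 : 0 < γ') (hγ0 : 0 < γ) (hγ1 : γ < 1)
    (hintc : ∫ ω, Real.log (c ω) ∂m < Real.log γ')
    (hγ'γ : Real.log γ' < Real.log γ) (hγneg : Real.log γ < 0)
    (A : Ω → ℝ)
    (hA : ∀ ω, A ω = ∑' j : ℕ,
      γ ^ (-(j : ℤ) - 1) * d (σinv^[j + 1] ω) * ∏ k ∈ Finset.range j, c (σinv^[k + 1] ω)) :
    ∀ᵐ ω ∂m,
      Summable (fun j : ℕ =>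
        γ ^ (-(j : ℤ) - 1) * d (σinv^[j + 1] ω) * ∏ k ∈ Finset.range j, c (σinv^[k + 1] ω)) ∧
      γ * A (σ ω) = c ω * A ω + d ω :=
  stmt10_general m σ σinv herg hlinv hrinv hinvmeas c d hcm hcpos hdpos hlogc hlogd γ γ' hγ0 hintc
    hγ'γ A hA
end
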